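/- Define a linear order on monomials (colored partitions) as follows: monomials are finite multisets of pairs (γ, -j) with γ in a finite linearly ordered set of colors and j ∈ ℕ; first compare 'shapes' (the function j ↦ number of factors of degree -j, compared lexicographically at the smallest j where they differ), then, for equal shapes, compare the sequences of colors sorted in the prescribed descending order, lexicographically from the right. This order is compatible with multiplication: if x(δ1) ≤ x(δ2) and x(μ1) ≤ x(μ2) then x(δ1)x(μ1) ≤ x(δ2)x(μ2), with strict inequality in the conclusion if either hypothesis is strict. -/

import Mathlib

/-! The order `monLT` is the pullback of the lexicographic order on the pair
(shape, multiplicity vector), where the multiplicity vector is re-indexed by `ℕ ×ₗ Γᵒᵈ` so that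
the factors compared first (the larger ones) come first. Both components lie in lexicographic
function spaces `Lex (ι → ℕ)`, which are ordered cancellative monoids, and so is their
lexicographic product; the encoding is additive and injective, so compatibility with
multiplication is monotonicity of addition there. -/

open Finset

variable {Γ : Type*}

/-- Monomials (colored partitions) are finitely supported multiplicity functions on
the factors `x_γ(-j)`, `γ ∈ Γ`, `j ∈ ℕ`; multiplication is addition of multiplicities.
The shape `s(π)(j)` is the total number of factors of degree `-j`. -/
noncomputable def shape [Fintype Γ] (π : (Γ × ℕ) →₀ ℕ) (j : ℕ) : ℕ := ∑ γ : Γ, π (γ, j)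

/-- `s < s'` iff there is `j₀` with `s j = s' j` for `j < j₀` and `s j₀ < s' j₀`. -/
def shapeLT (s s' : ℕ → ℕ) : Prop :=
  ∃ j0 : ℕ, (∀ j < j0, s j = s' j) ∧ s j0 < s' j0

/-- Strict order on factors: `x_δ(-i) < x_τ(-j)` iff `-i < -j`, or `i = j` and `δ < τ`.
`facLT p q` means the factor `p` is strictly smaller than `q`. -/
def facLT [LinearOrder Γ] (p q : Γ × ℕ) : Prop := q.2 < p.2 ∨ (p.2 = q.2 ∧ p.1 < q.1)

/-- The linear order on monomials: first compare shapes; for equal shapes compare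
colors starting from the largest factor (i.e. from the right in the descending
presentation): `π < π'` iff they agree on all factors above some factor `p`
and `π` has strictly fewer copies of `p` than `π'`. -/
def monLT [Fintype Γ] [LinearOrder Γ] (π π' : (Γ × ℕ) →₀ ℕ) : Prop :=
  shapeLT (shape π) (shape π') ∨
    (shape π = shape π' ∧ ∃ p : Γ × ℕ, (∀ q, facLT p q → π q = π' q) ∧ π p < π' p)

def monLE [Fintype Γ] [LinearOrder Γ] (π π' : (Γ × ℕ) →₀ ℕ) : Prop :=
  monLT π π' ∨ π = π'

lemma shape_add [Fintype Γ] (π π' : (Γ × ℕ) →₀ ℕ) : shape (π + π') = shape π + shape π' := by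
  ext j
  simp [shape, sum_add_distrib]

def factorKeyEquiv [LinearOrder Γ] : Γ × ℕ ≃ ℕ ×ₗ Γᵒᵈ :=
  (Equiv.prodComm Γ ℕ).trans ((Equiv.prodCongr (Equiv.refl ℕ) OrderDual.toDual).trans toLex)

lemma factorKeyEquiv_lt_factorKeyEquiv [LinearOrder Γ] {p q : Γ × ℕ} :
    factorKeyEquiv q < factorKeyEquiv p ↔ facLT p q := by
  simp [factorKeyEquiv, Prod.Lex.toLex_lt_toLex, facLT, eq_comm]

noncomputable def monomialKey [Fintype Γ] [LinearOrder Γ] (π : (Γ × ℕ) →₀ ℕ) :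
    Lex (ℕ → ℕ) ×ₗ Lex (ℕ ×ₗ Γᵒᵈ → ℕ) :=
  toLex (toLex (shape π), toLex (π ∘ factorKeyEquiv.symm))

lemma monomialKey_add [Fintype Γ] [LinearOrder Γ] (π π' : (Γ × ℕ) →₀ ℕ) :
    monomialKey (π + π') = monomialKey π + monomialKey π' := by
  simp only [monomialKey, shape_add, Finsupp.coe_add]
  rfl

lemma monomialKey_injective [Fintype Γ] [LinearOrder Γ] :
    Function.Injective (monomialKey (Γ := Γ)) := fun _ _ h =>
  DFunLike.coe_injective <| factorKeyEquiv.symm.surjective.injective_comp_right <|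
    congrArg (fun k => ofLex (ofLex k).2) h

lemma monLT_iff_monomialKey_lt [Fintype Γ] [LinearOrder Γ] {π π' : (Γ × ℕ) →₀ ℕ} :
    monLT π π' ↔ monomialKey π < monomialKey π' := by
  unfold monomialKey monLT
  rw [Prod.Lex.toLex_lt_toLex]
  refine or_congr Iff.rfl <| and_congr_right fun _ =>
    (factorKeyEquiv (Γ := Γ)).exists_congr fun p => ?_
  refine and_congr (factorKeyEquiv.forall_congr fun q => ?_) (by simp)
  simp [factorKeyEquiv_lt_factorKeyEquiv]

lemma monLE_iff_monomialKey_le [Fintype Γ] [LinearOrder Γ] {π π' : (Γ × ℕ) →₀ ℕ} :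
    monLE π π' ↔ monomialKey π ≤ monomialKey π' := by
  rw [monLE, monLT_iff_monomialKey_lt, le_iff_lt_or_eq, monomialKey_injective.eq_iff]

/-- The monomial order is compatible with multiplication: if `x(δ₁) ≤ x(δ₂)` and
`x(μ₁) ≤ x(μ₂)` then `x(δ₁)x(μ₁) ≤ x(δ₂)x(μ₂)`, strictly if either hypothesis is strict. -/
theorem monomial_order_compatible [Fintype Γ] [LinearOrder Γ]
    (d1 d2 m1 m2 : (Γ × ℕ) →₀ ℕ) (h1 : monLE d1 d2) (h2 : monLE m1 m2) :
    monLE (d1 + m1) (d2 + m2) ∧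
      ((monLT d1 d2 ∨ monLT m1 m2) → monLT (d1 + m1) (d2 + m2)) := by
  simp only [monLE_iff_monomialKey_le, monLT_iff_monomialKey_lt, monomialKey_add] at *
  exact ⟨add_le_add h1 h2, fun h => h.elim (add_lt_add_of_lt_of_le · h2)
    (add_lt_add_of_le_of_lt h1 ·)⟩
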